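/- arXiv:math/0210314 — 2 statements merged into one kernel-verified Lean document; each statement's English description precedes it below -/
import Mathlib

section
/- Let μ be a positive Radon measure on [0,∞) with 0 in its support and such that ∫_0^∞ n₀^{-2σ} dμ(σ) < ∞ for some integer n₀ ≥ 2. Define wₙ = ∫_0^∞ n^{-2σ} dμ(σ) for n ≥ n₀. Then for every ε > 0 there exists c > 0 such that wₙ > c·n^{-ε} for all n ≥ n₀. -/
/-!
For `σ ≤ ε / 2` the integrand `n ^ (-2σ)` is at least `n ^ (-ε)`, so `wₙ ≥ μ(Iic (ε/2)) · n ^ (-ε)`.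
That mass is positive because `0` lies in the support of `μ`, and finite because the integrable
function `n₀ ^ (-2σ)` is bounded below by `n₀ ^ (-ε)` on `Iic (ε/2)`.
-/

open MeasureTheory Set

variable {μ : Measure ℝ}

lemma integrable_rpow_neg_two_mul_of_le {a b : ℝ} (ha : 0 < a) (hab : a ≤ b)
    (hneg : μ (Iio 0) = 0) (hint : Integrable (fun σ : ℝ => a ^ (-2 * σ)) μ) :
    Integrable (fun σ : ℝ => b ^ (-2 * σ)) μ := by
  have hnonneg : ∀ᵐ σ ∂μ, 0 ≤ σ := ae_iff.2 <| by simp only [not_le]; exact hneg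
  refine hint.mono' (measurable_const.pow (by fun_prop)).aestronglyMeasurable ?_
  filter_upwards [hnonneg] with σ hσ
  rw [Real.norm_of_nonneg (Real.rpow_nonneg (ha.le.trans hab) _)]
  exact Real.rpow_le_rpow_of_nonpos ha hab (by linarith)

lemma measure_Iic_lt_top_of_integrable_rpow {a : ℝ} (ha : 1 ≤ a)
    (hint : Integrable (fun σ : ℝ => a ^ (-2 * σ)) μ) (t : ℝ) : μ (Iic t) < ⊤ :=
  (measure_mono fun σ (hσ : σ ≤ t) =>
    (Real.rpow_le_rpow_of_exponent_le ha (by linarith) : a ^ (-2 * t) ≤ a ^ (-2 * σ))).trans_lt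
    (hint.measure_ge_lt_top (Real.rpow_pos_of_pos (by linarith) _))

lemma measureReal_Iic_mul_rpow_le_integral {b : ℝ} (hb : 1 ≤ b) (t : ℝ) (hfin : μ (Iic (t / 2)) ≠ ⊤)
    (hint : Integrable (fun σ : ℝ => b ^ (-2 * σ)) μ) :
    b ^ (-t) * μ.real (Iic (t / 2)) ≤ ∫ σ, b ^ (-2 * σ) ∂μ :=
  calc b ^ (-t) * μ.real (Iic (t / 2))
      ≤ ∫ σ in Iic (t / 2), b ^ (-2 * σ) ∂μ :=
        setIntegral_ge_of_const_le_real measurableSet_Iic hfin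
          (fun σ (hσ : σ ≤ t / 2) => Real.rpow_le_rpow_of_exponent_le hb (by linarith))
          hint.integrableOn
    _ ≤ ∫ σ, b ^ (-2 * σ) ∂μ :=
        setIntegral_le_integral hint (.of_forall fun _ => Real.rpow_nonneg (by linarith) _)

theorem moments_decay_slowly_general (μ : Measure ℝ) (n₀ : ℕ) (hn₀ : 2 ≤ n₀)
    (hneg : μ (Set.Iio 0) = 0)
    (hsupp : ∀ ε > (0 : ℝ), 0 < μ (Set.Ico 0 ε))
    (hint : Integrable (fun σ : ℝ => (n₀ : ℝ) ^ (-2 * σ)) μ) :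
    ∀ ε > (0 : ℝ), ∃ c > (0 : ℝ), ∀ n : ℕ, n₀ ≤ n →
      c * (n : ℝ) ^ (-ε) < ∫ σ, (n : ℝ) ^ (-2 * σ) ∂μ := by
  intro ε hε
  have hn₀' : (1 : ℝ) ≤ n₀ := by exact_mod_cast one_le_two.trans hn₀
  have hfin := measure_Iic_lt_top_of_integrable_rpow hn₀' hint (ε / 2)
  have hpos : 0 < μ.real (Iic (ε / 2)) :=
    ENNReal.toReal_pos
      ((hsupp (ε / 2) (by positivity)).trans_le (measure_mono fun _ h => h.2.le)).ne' hfin.ne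
  refine ⟨μ.real (Iic (ε / 2)) / 2, half_pos hpos, fun n hn => ?_⟩
  have hn' : (n₀ : ℝ) ≤ n := by exact_mod_cast hn
  have hn_pos : 0 < (n : ℝ) ^ (-ε) := Real.rpow_pos_of_pos (by linarith) _
  calc μ.real (Iic (ε / 2)) / 2 * (n : ℝ) ^ (-ε)
      < (n : ℝ) ^ (-ε) * μ.real (Iic (ε / 2)) := by
        rw [mul_comm]
        exact mul_lt_mul_of_pos_left (half_lt_self hpos) hn_pos
    _ ≤ ∫ σ, (n : ℝ) ^ (-2 * σ) ∂μ :=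
        measureReal_Iic_mul_rpow_le_integral (hn₀'.trans hn') ε hfin.ne
          (integrable_rpow_neg_two_mul_of_le (by linarith) hn' hneg hint)

/-- The moments `wₙ = ∫ n^{-2σ} dμ(σ)` of a positive Radon measure on `[0,∞)` with
`0` in its support decay more slowly than any negative power of `n`. -/
theorem moments_decay_slowly (μ : Measure ℝ) [μ.Regular] (n₀ : ℕ) (hn₀ : 2 ≤ n₀)
    (hneg : μ (Set.Iio 0) = 0)
    (hsupp : ∀ ε > (0 : ℝ), 0 < μ (Set.Ico 0 ε))
    (hint : Integrable (fun σ : ℝ => (n₀ : ℝ) ^ (-2 * σ)) μ) :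
    ∀ ε > (0 : ℝ), ∃ c > (0 : ℝ), ∀ n : ℕ, n₀ ≤ n →
      c * (n : ℝ) ^ (-ε) < ∫ σ, (n : ℝ) ^ (-2 * σ) ∂μ :=
  moments_decay_slowly_general μ n₀ hn₀ hneg hsupp hint
end

section
/- Let μ be a positive measure on [0,∞) with finite moments wₙ = ∫ n^{-2σ} dμ(σ) for n ≥ n₀, and let f(s) = ∑_{n=n₀}^{N} aₙ n^{-s} be a finite Dirichlet polynomial. Then ∑_{n=n₀}^{N} |aₙ|² wₙ = lim_{c→0⁺} lim_{T→∞} (1/(2T)) ∫_{-T}^{T} ∫_0^∞ |f(σ + c + it)|² dμ(σ) dt. -/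
open Filter Topology MeasureTheory

noncomputable def Ecoef (a : ℕ → ℂ) (m n : ℕ) (t : ℝ) : ℝ :=
  (a m * (starRingEnd ℂ) (a n) *
    Complex.exp (-((t : ℂ) * ((Real.log m - Real.log n : ℝ) : ℂ)) * Complex.I)).re

lemma normSq_sum_eq (S : Finset ℕ) (b : ℕ → ℂ) :
    ‖∑ n ∈ S, b n‖ ^ 2 = ∑ m ∈ S, ∑ n ∈ S, (b m * (starRingEnd ℂ) (b n)).re := by
  have h : ∀ z : ℂ, ‖z‖ ^ 2 = (z * (starRingEnd ℂ) z).re := fun z => by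
    rw [Complex.mul_conj]
    simp [Complex.sq_norm]
  rw [h, map_sum, Finset.sum_mul_sum, Complex.re_sum]
  exact Finset.sum_congr rfl fun m _ => Complex.re_sum _ _

lemma pointwise_eq (a : ℕ → ℂ) (S : Finset ℕ) (hS : ∀ n ∈ S, 1 ≤ n) (x t : ℝ) :
    ‖∑ n ∈ S, a n * (n : ℂ) ^ (-((x : ℂ) + (t : ℂ) * Complex.I))‖ ^ 2
      = ∑ m ∈ S, ∑ n ∈ S, Ecoef a m n t * ((m : ℝ) * (n : ℝ)) ^ (-x) := by
  rw [normSq_sum_eq]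
  refine Finset.sum_congr rfl fun m hm => Finset.sum_congr rfl fun n hn => ?_
  have hm1 := hS m hm
  have hn1 := hS n hn
  have hm0 : (0:ℝ) < m := by exact_mod_cast hm1
  have hn0 : (0:ℝ) < n := by exact_mod_cast hn1
  have hcpow : ∀ k : ℕ, 1 ≤ k →
      (k : ℂ) ^ (-((x : ℂ) + (t : ℂ) * Complex.I))
        = Complex.exp (((Real.log k : ℝ) : ℂ) * (-((x : ℂ) + (t : ℂ) * Complex.I))) := by
    intro k hk
    rw [Complex.cpow_def_of_ne_zero (Nat.cast_ne_zero.mpr (by omega) : (k:ℂ) ≠ 0),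
      Complex.natCast_log]
  rw [hcpow m hm1, hcpow n hn1]
  have hbase : ((m:ℝ)*(n:ℝ)) ^ (-x) = Real.exp ((Real.log m + Real.log n) * (-x)) := by
    rw [Real.rpow_def_of_pos (mul_pos hm0 hn0), Real.log_mul hm0.ne' hn0.ne']
  have hz : a m * Complex.exp (((Real.log m : ℝ) : ℂ) * (-((x : ℂ) + (t : ℂ) * Complex.I)))
      * (starRingEnd ℂ) (a n * Complex.exp (((Real.log n : ℝ) : ℂ) * (-((x : ℂ) + (t : ℂ) * Complex.I))))
      = ((Real.exp ((Real.log m + Real.log n) * (-x)) : ℝ) : ℂ)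
        * (a m * (starRingEnd ℂ) (a n) *
          Complex.exp (-((t : ℂ) * ((Real.log m - Real.log n : ℝ) : ℂ)) * Complex.I)) := by
    rw [map_mul, ← Complex.exp_conj, map_mul, Complex.conj_ofReal]
    have hce : (starRingEnd ℂ) (-((x : ℂ) + (t : ℂ) * Complex.I))
        = -((x:ℂ) - (t:ℂ) * Complex.I) := by
      simp [Complex.conj_ofReal, Complex.conj_I]
      ring
    rw [hce, Complex.ofReal_exp, mul_mul_mul_comm, ← Complex.exp_add]
    rw [show (((Real.log m : ℝ):ℂ) * (-((x:ℂ)+(t:ℂ)*Complex.I))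
        + ((Real.log n : ℝ):ℂ) * (-((x:ℂ)-(t:ℂ)*Complex.I)))
        = ((((Real.log m + Real.log n) * (-x) : ℝ)) : ℂ)
          + (-((t:ℂ) * ((Real.log m - Real.log n : ℝ):ℂ)) * Complex.I) from by push_cast; ring]
    rw [Complex.exp_add]
    ring
  rw [hz, Complex.re_ofReal_mul, hbase, Ecoef]
  ring

lemma integrable_rpow_neg {μ : Measure ℝ} (hneg : μ (Set.Iio 0) = 0) {n₀ : ℕ} (hn₀ : 1 ≤ n₀)
    (hint : Integrable (fun σ : ℝ => (n₀ : ℝ) ^ (-2 * σ)) μ)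
    {b : ℝ} (hb : (n₀:ℝ) * n₀ ≤ b) : Integrable (fun σ : ℝ => b ^ (-σ)) μ := by
  have hn₀0 : (0:ℝ) < n₀ := by exact_mod_cast hn₀
  have hb0 : (0:ℝ) < b := lt_of_lt_of_le (mul_pos hn₀0 hn₀0) hb
  have hae : ∀ᵐ σ ∂μ, 0 ≤ σ := by
    rw [ae_iff]
    have : {σ : ℝ | ¬ 0 ≤ σ} = Set.Iio 0 := by ext σ; simp [not_le]
    rw [this]; exact hneg
  refine hint.mono' ?_ ?_
  · have : (fun σ : ℝ => b ^ (-σ)) = fun σ => Real.exp (Real.log b * (-σ)) := by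
      funext σ; rw [Real.rpow_def_of_pos hb0]
    rw [this]
    exact (Real.continuous_exp.comp (by fun_prop)).aestronglyMeasurable
  · filter_upwards [hae] with σ hσ
    rw [Real.norm_eq_abs, abs_of_nonneg (Real.rpow_nonneg hb0.le _)]
    calc b ^ (-σ) ≤ ((n₀:ℝ)*n₀) ^ (-σ) :=
          Real.rpow_le_rpow_of_nonpos (mul_pos hn₀0 hn₀0) hb (neg_nonpos.mpr hσ)
      _ = (n₀:ℝ) ^ (-2*σ) := by
          rw [Real.mul_rpow hn₀0.le hn₀0.le, ← Real.rpow_add hn₀0]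
          norm_num
          ring_nf

lemma offdiag_tendsto (w : ℂ) (Δ : ℝ) (hΔ : Δ ≠ 0) (K : ℝ) :
    Tendsto (fun T : ℝ => (1/(2*T)) *
      ((∫ t in Set.Ioc (-T) T, (w * Complex.exp (-((t:ℂ) * (Δ:ℂ)) * Complex.I)).re) * K))
      atTop (𝓝 0) := by
  have hc' : (-(Δ:ℂ) * Complex.I) ≠ 0 := by
    simp [Complex.ext_iff, hΔ]
  have hfun : ∀ t : ℝ, -((t:ℂ) * (Δ:ℂ)) * Complex.I = (-(Δ:ℂ) * Complex.I) * (t:ℂ) := by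
    intro t; ring
  have hcont : Continuous fun t : ℝ => w * Complex.exp ((-(Δ:ℂ) * Complex.I) * (t:ℂ)) := by
    fun_prop
  have hbound : ∀ T : ℝ, 0 ≤ T →
      |∫ t in Set.Ioc (-T) T, (w * Complex.exp (-((t:ℂ) * (Δ:ℂ)) * Complex.I)).re|
        ≤ 2 * ‖w‖ / |Δ| := by
    intro T hT
    have hInt : IntegrableOn (fun t : ℝ => w * Complex.exp ((-(Δ:ℂ) * Complex.I) * (t:ℂ)))
        (Set.Ioc (-T) T) := hcont.integrableOn_Ioc
    have h1 : ∫ t in Set.Ioc (-T) T, (w * Complex.exp (-((t:ℂ) * (Δ:ℂ)) * Complex.I)).re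
        = (∫ t in Set.Ioc (-T) T, w * Complex.exp ((-(Δ:ℂ) * Complex.I) * (t:ℂ))).re := by
      simp_rw [hfun]
      exact integral_re hInt
    have h2 : (∫ t in Set.Ioc (-T) T, w * Complex.exp ((-(Δ:ℂ) * Complex.I) * (t:ℂ)))
        = w * ((Complex.exp ((-(Δ:ℂ) * Complex.I) * T)
            - Complex.exp ((-(Δ:ℂ) * Complex.I) * (-(T:ℂ)))) / (-(Δ:ℂ) * Complex.I)) := by
      rw [← intervalIntegral.integral_of_le (by linarith : -T ≤ T),
        intervalIntegral.integral_const_mul, integral_exp_mul_complex hc']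
      push_cast
      ring
    rw [h1, h2]
    have habs : ∀ z : ℂ, z.re = 0 → ‖Complex.exp z‖ = 1 := by
      intro z hz
      rw [Complex.norm_exp, hz, Real.exp_zero]
    have hnc : ‖(-(Δ:ℂ) * Complex.I)‖ = |Δ| := by
      simp
    calc |(w * ((Complex.exp ((-(Δ:ℂ) * Complex.I) * T)
            - Complex.exp ((-(Δ:ℂ) * Complex.I) * (-(T:ℂ)))) / (-(Δ:ℂ) * Complex.I))).re|
        ≤ ‖w * ((Complex.exp ((-(Δ:ℂ) * Complex.I) * T)
            - Complex.exp ((-(Δ:ℂ) * Complex.I) * (-(T:ℂ)))) / (-(Δ:ℂ) * Complex.I))‖ :=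
          Complex.abs_re_le_norm _
      _ = ‖w‖ * (‖Complex.exp ((-(Δ:ℂ) * Complex.I) * T)
            - Complex.exp ((-(Δ:ℂ) * Complex.I) * (-(T:ℂ)))‖ / ‖(-(Δ:ℂ) * Complex.I)‖) := by
          rw [norm_mul, norm_div]
      _ ≤ ‖w‖ * ((‖Complex.exp ((-(Δ:ℂ) * Complex.I) * T)‖
            + ‖Complex.exp ((-(Δ:ℂ) * Complex.I) * (-(T:ℂ)))‖) / ‖(-(Δ:ℂ) * Complex.I)‖) := by
          gcongr
          exact norm_sub_le _ _
      _ = 2 * ‖w‖ / |Δ| := by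
          rw [habs _ (by simp), habs _ (by simp), hnc]
          ring
  have hgo : Tendsto (fun T : ℝ => (2 * ‖w‖ / |Δ| * |K|) * (1/(2*T))) atTop (𝓝 0) := by
    have h2T : Tendsto (fun T : ℝ => 2*T) atTop atTop :=
      Tendsto.const_mul_atTop two_pos tendsto_id
    have := h2T.inv_tendsto_atTop
    simpa [one_div, mul_zero] using (this.const_mul (2 * ‖w‖ / |Δ| * |K|))
  refine squeeze_zero_norm' ?_ hgo
  filter_upwards [eventually_gt_atTop (0:ℝ)] with T hT
  rw [Real.norm_eq_abs, abs_mul, abs_mul]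
  rw [show |1/(2*T)| = 1/(2*T) from abs_of_pos (by positivity)]
  have h1 := hbound T hT.le
  calc 1/(2*T) * (|∫ t in Set.Ioc (-T) T, (w * Complex.exp (-((t:ℂ) * (Δ:ℂ)) * Complex.I)).re| * |K|)
      ≤ 1/(2*T) * ((2 * ‖w‖ / |Δ|) * |K|) := by
        gcongr
      _ = 2 * ‖w‖ / |Δ| * |K| * (1/(2*T)) := by ring

lemma diag_tendsto (r K : ℝ) :
    Tendsto (fun T : ℝ => (1/(2*T)) * ((∫ _t in Set.Ioc (-T) T, r) * K)) atTop (𝓝 (r * K)) := by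
  refine Tendsto.congr' ?_ (tendsto_const_nhds (x := r * K))
  filter_upwards [eventually_gt_atTop (0:ℝ)] with T hT
  rw [setIntegral_const, Measure.real, Real.volume_Ioc,
    ENNReal.toReal_ofReal (by linarith : (0:ℝ) ≤ T - -T)]
  have h2T : (2*T) ≠ 0 := by positivity
  field_simp
  ring

lemma sigma_integral (μ : Measure ℝ) (hneg : μ (Set.Iio 0) = 0)
    (n₀ N : ℕ) (hn₀ : 1 ≤ n₀) (a : ℕ → ℂ)
    (hint : Integrable (fun σ : ℝ => (n₀ : ℝ) ^ (-2 * σ)) μ) (c t : ℝ) :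
    (∫ σ, ‖∑ n ∈ Finset.Icc n₀ N,
        a n * (n : ℂ) ^ (-(((σ + c : ℝ) : ℂ) + (t : ℂ) * Complex.I))‖ ^ 2 ∂μ)
      = ∑ m ∈ Finset.Icc n₀ N, ∑ n ∈ Finset.Icc n₀ N,
          Ecoef a m n t * (((m:ℝ)*(n:ℝ)) ^ (-c) * ∫ σ, ((m:ℝ)*(n:ℝ)) ^ (-σ) ∂μ) := by
  have hS : ∀ n ∈ Finset.Icc n₀ N, 1 ≤ n := fun n hn =>
    le_trans hn₀ (Finset.mem_Icc.mp hn).1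
  have hSpos : ∀ n ∈ Finset.Icc n₀ N, (0:ℝ) < n := fun n hn => by
    exact_mod_cast Nat.lt_of_lt_of_le Nat.zero_lt_one (hS n hn)
  have hb : ∀ m ∈ Finset.Icc n₀ N, ∀ n ∈ Finset.Icc n₀ N,
      Integrable (fun σ : ℝ => ((m:ℝ)*(n:ℝ)) ^ (-σ)) μ := by
    intro m hm n hn
    refine integrable_rpow_neg hneg hn₀ hint ?_
    have h1 : (n₀:ℝ) ≤ (m:ℝ) := by exact_mod_cast (Finset.mem_Icc.mp hm).1
    have h2 : (n₀:ℝ) ≤ (n:ℝ) := by exact_mod_cast (Finset.mem_Icc.mp hn).1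
    have h0 : (0:ℝ) < n₀ := by exact_mod_cast hn₀
    nlinarith
  have hfeq : ∀ m ∈ Finset.Icc n₀ N, ∀ n ∈ Finset.Icc n₀ N,
      (fun σ : ℝ => Ecoef a m n t * ((m:ℝ)*(n:ℝ)) ^ (-(σ+c)))
        = fun σ : ℝ => (Ecoef a m n t * ((m:ℝ)*(n:ℝ)) ^ (-c)) * ((m:ℝ)*(n:ℝ)) ^ (-σ) := by
    intro m hm n hn
    funext σ
    rw [show -(σ+c) = -c + -σ by ring,
      Real.rpow_add (mul_pos (hSpos m hm) (hSpos n hn))]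
    ring
  have hInt : ∀ m ∈ Finset.Icc n₀ N, ∀ n ∈ Finset.Icc n₀ N,
      Integrable (fun σ : ℝ => Ecoef a m n t * ((m:ℝ)*(n:ℝ)) ^ (-(σ+c))) μ := by
    intro m hm n hn
    rw [hfeq m hm n hn]
    exact (hb m hm n hn).const_mul _
  calc (∫ σ, ‖∑ n ∈ Finset.Icc n₀ N,
        a n * (n : ℂ) ^ (-(((σ + c : ℝ) : ℂ) + (t : ℂ) * Complex.I))‖ ^ 2 ∂μ)
      = ∫ σ, ∑ m ∈ Finset.Icc n₀ N, ∑ n ∈ Finset.Icc n₀ N,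
          Ecoef a m n t * ((m:ℝ)*(n:ℝ)) ^ (-(σ+c)) ∂μ := by
        refine integral_congr_ae (Filter.Eventually.of_forall fun σ => ?_)
        exact pointwise_eq a _ hS (σ+c) t
    _ = ∑ m ∈ Finset.Icc n₀ N, ∑ n ∈ Finset.Icc n₀ N,
          ∫ σ, Ecoef a m n t * ((m:ℝ)*(n:ℝ)) ^ (-(σ+c)) ∂μ := by
        rw [integral_finset_sum _ (fun m hm =>
          integrable_finset_sum _ (fun n hn => hInt m hm n hn))]
        exact Finset.sum_congr rfl fun m hm =>
          integral_finset_sum _ (fun n hn => hInt m hm n hn)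
    _ = ∑ m ∈ Finset.Icc n₀ N, ∑ n ∈ Finset.Icc n₀ N,
          Ecoef a m n t * (((m:ℝ)*(n:ℝ)) ^ (-c) * ∫ σ, ((m:ℝ)*(n:ℝ)) ^ (-σ) ∂μ) := by
        refine Finset.sum_congr rfl fun m hm => Finset.sum_congr rfl fun n hn => ?_
        rw [hfeq m hm n hn, MeasureTheory.integral_const_mul, mul_assoc]

/-- Plancherel formula (Theorem 1.1) for finite Dirichlet polynomials:
`∑ |aₙ|² wₙ = lim_{c→0⁺} lim_{T→∞} (1/2T) ∫_{-T}^T ∫_0^∞ |f(s+c)|² dμ(σ) dt`. -/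
theorem plancherel_formula (μ : Measure ℝ) (hneg : μ (Set.Iio 0) = 0)
    (n₀ N : ℕ) (hn₀ : 1 ≤ n₀) (a : ℕ → ℂ)
    (hint : Integrable (fun σ : ℝ => (n₀ : ℝ) ^ (-2 * σ)) μ)
    (g : ℝ → ℝ)
    (hg : ∀ c > (0 : ℝ), Tendsto (fun T : ℝ => (1 / (2 * T)) *
        ∫ t in Set.Ioc (-T) T, ∫ σ,
          ‖∑ n ∈ Finset.Icc n₀ N, a n * (n : ℂ) ^ (-(((σ + c : ℝ) : ℂ) + t * Complex.I))‖ ^ 2 ∂μ)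
      atTop (𝓝 (g c))) :
    Tendsto g (𝓝[>] 0)
      (𝓝 (∑ n ∈ Finset.Icc n₀ N, ‖a n‖ ^ 2 * ∫ σ, (n : ℝ) ^ (-2 * σ) ∂μ)) := by
  have hS1 : ∀ n ∈ Finset.Icc n₀ N, 1 ≤ n := fun n hn =>
    le_trans hn₀ (Finset.mem_Icc.mp hn).1
  have hSpos : ∀ n ∈ Finset.Icc n₀ N, (0:ℝ) < n := fun n hn => by
    exact_mod_cast Nat.lt_of_lt_of_le Nat.zero_lt_one (hS1 n hn)
  set V : ℕ → ℕ → ℝ := fun m n => ∫ σ, ((m:ℝ)*(n:ℝ)) ^ (-σ) ∂μ with hV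
  set L : ℝ → ℝ := fun c => ∑ n ∈ Finset.Icc n₀ N,
    ‖a n‖^2 * (((n:ℝ)*(n:ℝ)) ^ (-c) * V n n) with hL
  have hEcont : ∀ m n : ℕ, Continuous fun t : ℝ => Ecoef a m n t := by
    intro m n
    unfold Ecoef
    fun_prop
  have hmain : ∀ c : ℝ, 0 < c → Tendsto (fun T : ℝ => (1 / (2 * T)) *
      ∫ t in Set.Ioc (-T) T, ∫ σ,
        ‖∑ n ∈ Finset.Icc n₀ N, a n * (n : ℂ) ^ (-(((σ + c : ℝ) : ℂ) + t * Complex.I))‖ ^ 2 ∂μ)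
      atTop (𝓝 (L c)) := by
    intro c hc
    have hsig : ∀ t : ℝ, (∫ σ, ‖∑ n ∈ Finset.Icc n₀ N,
          a n * (n : ℂ) ^ (-(((σ + c : ℝ) : ℂ) + (t : ℂ) * Complex.I))‖ ^ 2 ∂μ)
        = ∑ m ∈ Finset.Icc n₀ N, ∑ n ∈ Finset.Icc n₀ N,
            Ecoef a m n t * (((m:ℝ)*(n:ℝ)) ^ (-c) * V m n) :=
      fun t => sigma_integral μ hneg n₀ N hn₀ a hint c t
    have hfun : (fun T : ℝ => (1 / (2 * T)) *
        ∫ t in Set.Ioc (-T) T, ∫ σ,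
          ‖∑ n ∈ Finset.Icc n₀ N, a n * (n : ℂ) ^ (-(((σ + c : ℝ) : ℂ) + t * Complex.I))‖ ^ 2 ∂μ)
        = fun T : ℝ => ∑ m ∈ Finset.Icc n₀ N, ∑ n ∈ Finset.Icc n₀ N,
            (1 / (2 * T)) * ((∫ t in Set.Ioc (-T) T, Ecoef a m n t)
              * (((m:ℝ)*(n:ℝ)) ^ (-c) * V m n)) := by
      funext T
      rw [show (∫ t in Set.Ioc (-T) T, ∫ σ,
          ‖∑ n ∈ Finset.Icc n₀ N, a n * (n : ℂ) ^ (-(((σ + c : ℝ) : ℂ) + t * Complex.I))‖ ^ 2 ∂μ)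
          = ∑ m ∈ Finset.Icc n₀ N, ∑ n ∈ Finset.Icc n₀ N,
              (∫ t in Set.Ioc (-T) T, Ecoef a m n t) * (((m:ℝ)*(n:ℝ)) ^ (-c) * V m n) from ?_]
      · rw [Finset.mul_sum]
        exact Finset.sum_congr rfl fun m _ => by rw [Finset.mul_sum]
      · simp only [hsig]
        rw [integral_finset_sum _ (fun m hm => integrable_finset_sum _
          (fun n hn => Continuous.integrableOn_Ioc (f := fun t =>
            Ecoef a m n t * (((m:ℝ)*(n:ℝ)) ^ (-c) * V m n)) ((hEcont m n).mul continuous_const)))]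
        refine Finset.sum_congr rfl fun m hm => ?_
        rw [integral_finset_sum _
          (fun n hn => Continuous.integrableOn_Ioc (f := fun t =>
            Ecoef a m n t * (((m:ℝ)*(n:ℝ)) ^ (-c) * V m n)) ((hEcont m n).mul continuous_const))]
        exact Finset.sum_congr rfl fun n hn => by rw [MeasureTheory.integral_mul_const]
    rw [hfun]
    have hterm : ∀ m ∈ Finset.Icc n₀ N, ∀ n ∈ Finset.Icc n₀ N,
        Tendsto (fun T : ℝ => (1 / (2 * T)) * ((∫ t in Set.Ioc (-T) T, Ecoef a m n t)
          * (((m:ℝ)*(n:ℝ)) ^ (-c) * V m n))) atTop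
        (𝓝 (if m = n then ‖a m‖^2 * (((m:ℝ)*(m:ℝ)) ^ (-c) * V m m) else 0)) := by
      intro m hm n hn
      by_cases hmn : m = n
      · subst hmn
        simp only [if_pos rfl]
        have hE : ∀ t : ℝ, Ecoef a m m t = ‖a m‖^2 := by
          intro t
          simp [Ecoef, Complex.mul_conj, Complex.normSq_eq_norm_sq,
            ← Complex.ofReal_pow, Complex.ofReal_re]
        simp only [hE]
        exact diag_tendsto _ _
      · simp only [if_neg hmn]
        have hΔ : Real.log m - Real.log n ≠ 0 := by
          intro h
          have hmn' : (m:ℝ) = (n:ℝ) := Real.log_injOn_pos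
            (Set.mem_Ioi.mpr (hSpos m hm)) (Set.mem_Ioi.mpr (hSpos n hn)) (by linarith)
          exact hmn (by exact_mod_cast hmn')
        exact offdiag_tendsto (a m * (starRingEnd ℂ) (a n)) _ hΔ _
    have hsum := tendsto_finset_sum (Finset.Icc n₀ N)
      (fun m hm => tendsto_finset_sum (Finset.Icc n₀ N) (fun n hn => hterm m hm n hn))
    have hLsum : (∑ m ∈ Finset.Icc n₀ N, ∑ n ∈ Finset.Icc n₀ N,
        if m = n then ‖a m‖^2 * (((m:ℝ)*(m:ℝ)) ^ (-c) * V m m) else 0) = L c := by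
      simp only [hL]
      refine Finset.sum_congr rfl fun m hm => ?_
      rw [Finset.sum_ite_eq (Finset.Icc n₀ N) m
        (fun _ => ‖a m‖^2 * (((m:ℝ)*(m:ℝ)) ^ (-c) * V m m)), if_pos hm]
    rw [← hLsum]
    exact hsum
  have hgL : ∀ c ∈ Set.Ioi (0:ℝ), g c = L c := fun c hc =>
    tendsto_nhds_unique (hg c hc) (hmain c hc)
  have hL0 : (∑ n ∈ Finset.Icc n₀ N, ‖a n‖ ^ 2 * ∫ σ, (n : ℝ) ^ (-2 * σ) ∂μ) = L 0 := by
    simp only [hL, hV, neg_zero, Real.rpow_zero, one_mul]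
    refine Finset.sum_congr rfl fun n hn => ?_
    congr 1
    refine integral_congr_ae (Filter.Eventually.of_forall fun σ => ?_)
    show ((n:ℝ)) ^ (-2 * σ) = ((n:ℝ)*(n:ℝ)) ^ (-σ)
    rw [Real.mul_rpow (hSpos n hn).le (hSpos n hn).le, ← Real.rpow_add (hSpos n hn)]
    norm_num
    ring_nf
  have hLcont : ContinuousAt L 0 := by
    apply Continuous.continuousAt
    apply continuous_finset_sum
    intro n hn
    apply continuous_const.mul
    apply Continuous.mul ?_ continuous_const
    have : (fun c : ℝ => ((n:ℝ)*(n:ℝ)) ^ (-c))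
        = fun c => Real.exp (Real.log ((n:ℝ)*(n:ℝ)) * (-c)) := funext fun c =>
      Real.rpow_def_of_pos (mul_pos (hSpos n hn) (hSpos n hn)) _
    rw [this]
    exact Real.continuous_exp.comp (by fun_prop)
  rw [hL0]
  refine Tendsto.congr' ?_ (hLcont.continuousWithinAt (s := Set.Ioi 0))
  filter_upwards [self_mem_nhdsWithin] with c hc
  exact (hgL c hc).symm
end
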